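/- Let s ≥ 2 and let t_1,…,t_s be nonnegative integers with t_1 ≥ 1 such that the binary code Φ(H^{t_1,…,t_s}) is not linear. Then the dimension of the kernel satisfies ker(Φ(H^{t_1,…,t_s})) ≥ σ + Σ_{i=1}^s t_i. -/

import Mathlib

/-- The `i`-th digit of the binary expansion of `u : ZMod (2^s)`. -/
def gdigit (s : ℕ) (u : ZMod (2^s)) (i : ℕ) : ZMod 2 :=
  if (ZMod.val u).testBit i then 1 else 0

/-- Carlet's generalized Gray map `φ : ZMod (2^s) → (Z_2^{s-1} → Z_2)`:
the coordinate indexed by `y ∈ Z_2^{s-1}` is `u_{s-1} + ∑ u_i y_i`. -/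
def gray (s : ℕ) (u : ZMod (2^s)) : (Fin (s - 1) → ZMod 2) → ZMod 2 :=
  fun y => gdigit s u (s - 1) + ∑ i : Fin (s - 1), gdigit s u (i : ℕ) * y i

/-- The coordinatewise extension `Φ` of the Gray map, on vectors indexed by `ι`. -/
def PhiMap {ι : Type} (s : ℕ) (u : ι → ZMod (2^s)) :
    ι × (Fin (s - 1) → ZMod 2) → ZMod 2 :=
  fun p => gray s (u p.1) p.2

/-- A binary code is linear if it is closed under addition. -/
def IsLinearCode {V : Type} [Add V] (C : Set V) : Prop :=
  ∀ x ∈ C, ∀ y ∈ C, x + y ∈ C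

/-- The kernel `K(C) = {x : x + C = C}` of a binary code. -/
def kernelSet {V : Type} [Add V] (C : Set V) : Set V :=
  {x | (fun c => x + c) '' C = C}

/-- The dimension over `Z_2` of the kernel of a binary code. -/
noncomputable def kerDim {ι : Type} (C : Set (ι → ZMod 2)) : ℕ :=
  Module.finrank (ZMod 2) (Submodule.span (ZMod 2) (kernelSet C))

/-- `τ = t_1 + ⋯ + t_s`, the number of rows of the generator matrix. -/
def tauSum (s : ℕ) (t : ℕ → ℕ) : ℕ := ∑ i ∈ Finset.Icc 1 s, t i

/-- `T_i = {j·2^{i-1} : 0 ≤ j ≤ 2^{s-i+1}-1} ⊆ ZMod (2^s)` (here `i` is 1-based). -/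
def Tset (s i : ℕ) : Set (ZMod (2^s)) :=
  {x | ∃ j : ℕ, j < 2 ^ (s - i + 1) ∧ x = (j : ZMod (2^s)) * 2 ^ (i - 1)}

/-- The block (1-based) containing the 1-based row position `p`:
the least `i ≥ 1` with `p ≤ t_1 + ⋯ + t_i`. -/
noncomputable def blockIdx (t : ℕ → ℕ) (p : ℕ) : ℕ :=
  sInf {i : ℕ | 1 ≤ i ∧ p ≤ ∑ j ∈ Finset.Icc 1 i, t j}

/-- A column of the generator matrix `A^{t_1,…,t_s}`: an element of
`{1} × T_1^{t_1-1} × T_2^{t_2} × ⋯ × T_s^{t_s}`. -/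
def IsHadCol (s : ℕ) (t : ℕ → ℕ) (z : Fin (tauSum s t) → ZMod (2^s)) : Prop :=
  (∀ q : Fin (tauSum s t), (q : ℕ) = 0 → z q = 1) ∧
  (∀ q : Fin (tauSum s t), 1 ≤ (q : ℕ) → z q ∈ Tset s (blockIdx t ((q : ℕ) + 1)))

/-- The type indexing the columns of `A^{t_1,…,t_s}` (hence the coordinates of the code). -/
abbrev ColIdx (s : ℕ) (t : ℕ → ℕ) : Type :=
  {z : Fin (tauSum s t) → ZMod (2^s) // IsHadCol s t z}

noncomputable instance (s : ℕ) (t : ℕ → ℕ) : Fintype (ColIdx s t) :=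
  Fintype.ofFinite _

/-- The `Z_{2^s}`-additive Hadamard code `H^{t_1,…,t_s}`: the subgroup generated by
the rows of `A^{t_1,…,t_s}` (row `q` sends the column `z` to its `q`-th entry). -/
def hadamardCode (s : ℕ) (t : ℕ → ℕ) : AddSubgroup (ColIdx s t → ZMod (2^s)) :=
  AddSubgroup.closure (Set.range (fun (q : Fin (tauSum s t)) => fun z : ColIdx s t => z.val q))

/-- `σ = 1` if `t_1 > 1`, and `σ = min {i ∈ {2,…,s} : t_i > 0}` if `t_1 = 1`. -/
noncomputable def sigmaIdx (s : ℕ) (t : ℕ → ℕ) : ℕ :=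
  if 1 < t 1 then 1 else sInf {i : ℕ | 2 ≤ i ∧ i ≤ s ∧ 0 < t i}

/-!
Write `x ⊕ y` for bitwise exclusive or on `ZMod (2^s)`. The Gray map turns it into addition,
`Φ (x ⊕ y) = Φ x + Φ y`, and `x ⊕ y = x + y - 2 (x ∧ y)`. Hence `Φ g` lies in the kernel of
`Φ(H)` as soon as `g ∈ H` and `2 (g ∧ v) ∈ H` for every `v ∈ H`. This holds for the `τ` codewords
`2^(s-b) r_q` of order two obtained by scaling the rows, and, because every codeword of `H` is
constant modulo `2^(σ-1)`, for the `σ` constant words `2^0, …, 2^(σ-2)` and `2^(s-1) - 2^(σ-1)`.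
Their images are linearly independent: the top binary digit at suitable columns separates the
scaled rows, the low digits at the first column separate the constants.

If `σ` falls outside `[1, s)`, all rows after the first take values in `{0, 2^(s-1)}`; then every
codeword is constant modulo `2^(s-1)`, the same criterion puts all of `Φ(H)` in its kernel, and
`Φ(H)` is linear.
-/

namespace Nat

theorem xor_add_two_mul_and (a b : ℕ) : (a ^^^ b) + 2 * (a &&& b) = a + b := by
  induction a using Nat.binaryRec generalizing b with
  | zero => simp
  | bit x m ih =>
    induction b using Nat.binaryRec with
    | zero => simp
    | bit y n _ =>
      have := ih n
      rw [Nat.xor_bit, Nat.land_bit]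
      simp only [Nat.bit_val]
      cases x <;> cases y <;> simp [Bool.toNat] <;> omega

theorem testBit_two_pow_sub_two_pow {k m : ℕ} (hkm : k ≤ m) (i : ℕ) :
    (2 ^ m - 2 ^ k).testBit i = (decide (k ≤ i) && decide (i < m)) := by
  have h : 2 ^ m - 2 ^ k = (2 ^ (m - k) - 1) <<< k := by
    rw [Nat.shiftLeft_eq, Nat.sub_mul, one_mul, ← pow_add, Nat.sub_add_cancel hkm]
  rw [h, Nat.testBit_shiftLeft, Nat.testBit_two_pow_sub_one]
  by_cases hi : k ≤ i <;> simp [hi]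
  omega

theorem two_pow_sub_two_pow_and_add_mod {k m : ℕ} (hkm : k ≤ m) (y : ℕ) :
    ((2 ^ m - 2 ^ k) &&& y) + y % 2 ^ k = y % 2 ^ m := by
  have hand : (2 ^ m - 2 ^ k) &&& y = 2 ^ k * (y % 2 ^ m / 2 ^ k) := by
    apply Nat.eq_of_testBit_eq
    intro i
    rw [mul_comm, ← Nat.shiftLeft_eq, ← Nat.shiftRight_eq_div_pow, Nat.testBit_and,
      testBit_two_pow_sub_two_pow hkm, Nat.testBit_shiftLeft, Nat.testBit_shiftRight,
      Nat.testBit_mod_two_pow]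
    by_cases hi : k ≤ i
    · rw [Nat.add_sub_cancel' hi]
      by_cases him : i < m <;> simp [hi, him]
    · simp [hi]
  rw [hand, ← Nat.mod_mod_of_dvd y (Nat.pow_dvd_pow 2 hkm), Nat.div_add_mod]

end Nat

section GrayMap

variable {s : ℕ}

def zxor (u v : ZMod (2 ^ s)) : ZMod (2 ^ s) := ((u.val ^^^ v.val : ℕ) : ZMod (2 ^ s))

def zand (u v : ZMod (2 ^ s)) : ZMod (2 ^ s) := ((u.val &&& v.val : ℕ) : ZMod (2 ^ s))

theorem val_zxor (u v : ZMod (2 ^ s)) : (zxor u v).val = u.val ^^^ v.val :=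
  ZMod.val_cast_of_lt (Nat.xor_lt_two_pow (ZMod.val_lt u) (ZMod.val_lt v))

theorem zxor_eq_add_sub (u v : ZMod (2 ^ s)) : zxor u v = u + v - 2 * zand u v := by
  have h := congrArg (Nat.cast : ℕ → ZMod (2 ^ s)) (Nat.xor_add_two_mul_and u.val v.val)
  push_cast [ZMod.natCast_zmod_val] at h
  rw [zxor, zand]
  linear_combination h

theorem gdigit_zxor (u v : ZMod (2 ^ s)) (i : ℕ) :
    gdigit s (zxor u v) i = gdigit s u i + gdigit s v i := by
  unfold gdigit
  rw [val_zxor, Nat.testBit_xor]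
  cases u.val.testBit i <;> cases v.val.testBit i <;> decide

theorem gray_zxor (u v : ZMod (2 ^ s)) (y : Fin (s - 1) → ZMod 2) :
    gray s (zxor u v) y = gray s u y + gray s v y := by
  simp only [gray, gdigit_zxor, add_mul, Finset.sum_add_distrib]
  ring

theorem phiMap_zxor {ι : Type} (u v : ι → ZMod (2 ^ s)) :
    PhiMap s (fun z => zxor (u z) (v z)) = PhiMap s u + PhiMap s v :=
  funext fun p => gray_zxor (u p.1) (v p.1) p.2

theorem gray_zero (u : ZMod (2 ^ s)) : gray s u 0 = gdigit s u (s - 1) := by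
  simp [gray]

theorem gray_single_add_gray_zero (u : ZMod (2 ^ s)) (d : Fin (s - 1)) :
    gray s u (Pi.single d 1) + gray s u 0 = gdigit s u d := by
  simp only [gray, Pi.single_apply, mul_ite, mul_one, mul_zero, Finset.sum_ite_eq',
    Finset.mem_univ, if_true, Pi.zero_apply, Finset.sum_const_zero, add_zero]
  rw [add_right_comm, CharTwo.add_self_eq_zero, zero_add]

theorem gdigit_natCast {n : ℕ} (hn : n < 2 ^ s) (i : ℕ) :
    gdigit s (n : ZMod (2 ^ s)) i = if n.testBit i then 1 else 0 := by
  rw [gdigit, ZMod.val_cast_of_lt hn]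

end GrayMap

section TwoAdic

variable {s : ℕ}

theorem two_mul_natCast_mod (hs : 1 ≤ s) (n : ℕ) :
    (2 : ZMod (2 ^ s)) * ((n % 2 ^ (s - 1) : ℕ) : ZMod (2 ^ s)) = 2 * n := by
  have h2s : ((2 * 2 ^ (s - 1) : ℕ) : ZMod (2 ^ s)) = 0 := by
    rw [← pow_succ', Nat.sub_add_cancel hs, ZMod.natCast_self]
  conv_rhs => rw [← Nat.mod_add_div n (2 ^ (s - 1))]
  push_cast at h2s ⊢
  linear_combination (-(n / 2 ^ (s - 1) : ℕ) : ZMod (2 ^ s)) * h2s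

theorem two_mul_zand (hs : 1 ≤ s) (u v : ZMod (2 ^ s)) :
    2 * zand u v = 2 * ((u.val % 2 ^ (s - 1) &&& v.val % 2 ^ (s - 1) : ℕ) : ZMod (2 ^ s)) := by
  rw [zand, ← Nat.and_mod_two_pow, two_mul_natCast_mod hs]

theorem val_mod_eq_zero_of_two_mul_eq_zero (hs : 1 ≤ s) {u : ZMod (2 ^ s)} (h : 2 * u = 0) :
    u.val % 2 ^ (s - 1) = 0 := by
  have hcast : ((2 * u.val : ℕ) : ZMod (2 ^ s)) = 0 := by
    push_cast [ZMod.natCast_zmod_val]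
    exact h
  have h2s : 2 ^ s = 2 * 2 ^ (s - 1) := by rw [← pow_succ', Nat.sub_add_cancel hs]
  rw [ZMod.natCast_eq_zero_iff] at hcast
  exact Nat.mod_eq_zero_of_dvd (Nat.dvd_of_mul_dvd_mul_left two_pos (h2s ▸ hcast))

theorem zand_eq_of_val_lt {k : ℕ} {a : ZMod (2 ^ s)} (ha : a.val < 2 ^ k) (x : ZMod (2 ^ s)) :
    zand a x = ((a.val &&& x.val % 2 ^ k : ℕ) : ZMod (2 ^ s)) := by
  rw [zand, ← Nat.mod_eq_of_lt (lt_of_le_of_lt Nat.and_le_left ha), Nat.and_mod_two_pow,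
    Nat.mod_eq_of_lt ha]

theorem two_mul_zand_two_pow_sub_two_pow {k : ℕ} (hk : k < s) (x : ZMod (2 ^ s)) :
    2 * zand ((2 ^ (s - 1) - 2 ^ k : ℕ) : ZMod (2 ^ s)) x
      = 2 * x - 2 * ((x.val % 2 ^ k : ℕ) : ZMod (2 ^ s)) := by
  have hlt : 2 ^ (s - 1) - 2 ^ k < 2 ^ s :=
    (Nat.sub_le _ _).trans_lt (Nat.pow_lt_pow_right (by norm_num) (by omega))
  have h := congrArg (fun n : ℕ => (2 : ZMod (2 ^ s)) * n)
    (Nat.two_pow_sub_two_pow_and_add_mod (show k ≤ s - 1 by omega) x.val)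
  simp only [Nat.cast_add, two_mul_natCast_mod (show 1 ≤ s by omega), ZMod.natCast_zmod_val] at h
  rw [zand, ZMod.val_cast_of_lt hlt]
  linear_combination h

theorem gdigit_two_pow {j : ℕ} (hj : j < s) (i : ℕ) :
    gdigit s ((2 : ZMod (2 ^ s)) ^ j) i = if i = j then 1 else 0 := by
  have h := gdigit_natCast (Nat.pow_lt_pow_right (by norm_num) hj) i
  push_cast at h
  rw [h, Nat.testBit_two_pow]
  by_cases hij : i = j
  · simp [hij]
  · simp [hij, Ne.symm hij]

theorem gdigit_zero (i : ℕ) : gdigit s (0 : ZMod (2 ^ s)) i = 0 := by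
  simp [gdigit]

theorem gdigit_eq_zero_of_two_mul_eq_zero {i : ℕ} (hs : 1 ≤ s) {u : ZMod (2 ^ s)}
    (h : 2 * u = 0) (hi : i < s - 1) : gdigit s u i = 0 := by
  have hbit := Nat.testBit_mod_two_pow u.val (s - 1) i
  rw [val_mod_eq_zero_of_two_mul_eq_zero hs h, Nat.zero_testBit, decide_eq_true hi,
    Bool.true_and] at hbit
  simp [gdigit, ← hbit]

end TwoAdic

theorem isLinearCode_of_subset_kernelSet {V : Type} [Add V] {C : Set V} (h : C ⊆ kernelSet C) :
    IsLinearCode C := by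
  intro x hx y hy
  rw [← (h hx : (fun c => x + c) '' C = C)]
  exact ⟨y, hy, rfl⟩

section Kernel

variable {ι : Type} {s : ℕ} (H : AddSubgroup (ι → ZMod (2 ^ s)))

theorem phiMap_mem_kernelSet {g : ι → ZMod (2 ^ s)} (hg : g ∈ H)
    (hand : ∀ v ∈ H, (fun z => 2 * zand (g z) (v z)) ∈ H) :
    PhiMap s g ∈ kernelSet (PhiMap s '' (H : Set (ι → ZMod (2 ^ s)))) := by
  have hxor : ∀ v ∈ H, (fun z => zxor (g z) (v z)) ∈ H := fun v hv => by
    have h : (fun z => zxor (g z) (v z)) = g + v - fun z => 2 * zand (g z) (v z) :=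
      funext fun z => zxor_eq_add_sub (g z) (v z)
    rw [h]
    exact H.sub_mem (H.add_mem hg hv) (hand v hv)
  have hgg : PhiMap s g + PhiMap s g = 0 := funext fun p => CharTwo.add_self_eq_zero (PhiMap s g p)
  ext w
  constructor
  · rintro ⟨_, ⟨v, hv, rfl⟩, rfl⟩
    exact ⟨_, hxor v hv, phiMap_zxor g v⟩
  · rintro ⟨v, hv, rfl⟩
    refine ⟨_, ⟨_, hxor v hv, rfl⟩, ?_⟩
    show PhiMap s g + PhiMap s (fun z => zxor (g z) (v z)) = PhiMap s v
    rw [phiMap_zxor, ← add_assoc, hgg, zero_add]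

theorem phiMap_mem_kernelSet_of_two_mul_eq_zero (hs : 1 ≤ s) {g : ι → ZMod (2 ^ s)}
    (hg : g ∈ H) (h2 : ∀ z, 2 * g z = 0) :
    PhiMap s g ∈ kernelSet (PhiMap s '' (H : Set (ι → ZMod (2 ^ s)))) := by
  refine phiMap_mem_kernelSet H hg fun v _ => ?_
  have h0 : (fun z => 2 * zand (g z) (v z)) = 0 := funext fun z => by
    rw [two_mul_zand hs, val_mod_eq_zero_of_two_mul_eq_zero hs (h2 z), Nat.zero_and,
      Nat.cast_zero, mul_zero, Pi.zero_apply]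
  rw [h0]
  exact H.zero_mem

def ConstModTwoPow (k : ℕ) : Prop :=
  ∀ v ∈ H, ∃ r : ℕ, ∀ z, (v z).val % 2 ^ k = r

variable {H}

theorem phiMap_const_mem_kernelSet_of_val_lt (hconst : ∀ c, (fun _ => c) ∈ H) {k : ℕ}
    (hH : ConstModTwoPow H k) {a : ZMod (2 ^ s)} (ha : a.val < 2 ^ k) :
    PhiMap s (fun _ => a) ∈ kernelSet (PhiMap s '' (H : Set (ι → ZMod (2 ^ s)))) := by
  refine phiMap_mem_kernelSet H (hconst a) fun v hv => ?_
  obtain ⟨r, hr⟩ := hH v hv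
  convert hconst (2 * ((a.val &&& r : ℕ) : ZMod (2 ^ s))) using 1
  funext z
  rw [zand_eq_of_val_lt ha, hr]

theorem phiMap_const_two_pow_sub_mem_kernelSet (hconst : ∀ c, (fun _ => c) ∈ H) {k : ℕ}
    (hH : ConstModTwoPow H k) (hk : k < s) :
    PhiMap s (fun _ => ((2 ^ (s - 1) - 2 ^ k : ℕ) : ZMod (2 ^ s))) ∈
      kernelSet (PhiMap s '' (H : Set (ι → ZMod (2 ^ s)))) := by
  refine phiMap_mem_kernelSet H (hconst _) fun v hv => ?_
  obtain ⟨r, hr⟩ := hH v hv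
  convert H.sub_mem (H.add_mem hv hv) (hconst (2 * (r : ZMod (2 ^ s)))) using 1
  funext z
  rw [two_mul_zand_two_pow_sub_two_pow hk, hr, two_mul]
  rfl

theorem isLinearCode_phiMap_image (hs : 1 ≤ s) (hconst : ∀ c, (fun _ => c) ∈ H)
    (hH : ConstModTwoPow H (s - 1)) :
    IsLinearCode (PhiMap s '' (H : Set (ι → ZMod (2 ^ s)))) := by
  refine isLinearCode_of_subset_kernelSet ?_
  rintro _ ⟨g, hg, rfl⟩
  refine phiMap_mem_kernelSet H hg fun v hv => ?_
  obtain ⟨r, hr⟩ := hH g hg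
  obtain ⟨r', hr'⟩ := hH v hv
  convert hconst (2 * ((r &&& r' : ℕ) : ZMod (2 ^ s))) using 1
  funext z
  rw [two_mul_zand hs, hr, hr']

end Kernel

section DigitForms

variable {ι : Type} (s : ℕ)

def topDigitForm (z : ι) : Module.Dual (ZMod 2) (ι × (Fin (s - 1) → ZMod 2) → ZMod 2) :=
  LinearMap.proj (z, 0)

def digitForm (z : ι) (d : Fin (s - 1)) :
    Module.Dual (ZMod 2) (ι × (Fin (s - 1) → ZMod 2) → ZMod 2) :=
  LinearMap.proj (R := ZMod 2) (φ := fun _ => ZMod 2) (z, Pi.single d 1) + topDigitForm s z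

variable {s}

theorem topDigitForm_phiMap (z : ι) (u : ι → ZMod (2 ^ s)) :
    topDigitForm s z (PhiMap s u) = gdigit s (u z) (s - 1) :=
  gray_zero (u z)

theorem digitForm_phiMap (z : ι) (d : Fin (s - 1)) (u : ι → ZMod (2 ^ s)) :
    digitForm s z d (PhiMap s u) = gdigit s (u z) d :=
  gray_single_add_gray_zero (u z) d

end DigitForms

theorem card_le_kerDim {ι κ : Type} [Finite ι] [Fintype κ] {C : Set (ι → ZMod 2)}
    {v : κ → ι → ZMod 2} (hv : LinearIndependent (ZMod 2) v) (hK : ∀ i, v i ∈ kernelSet C) :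
    Fintype.card κ ≤ kerDim C := by
  rw [← finrank_span_eq_card hv]
  exact Submodule.finrank_mono (Submodule.span_mono (Set.range_subset_iff.2 hK))

section Hadamard

variable {s : ℕ} {t : ℕ → ℕ}

theorem tauSum_pos (hs : 1 ≤ s) (ht : 1 ≤ t 1) : 0 < tauSum s t :=
  ht.trans_lt' zero_lt_one |>.trans_le
    (Finset.single_le_sum (fun _ _ => Nat.zero_le _) (Finset.mem_Icc.2 ⟨le_rfl, hs⟩))

theorem blockIdx_mem_Icc (hs : 1 ≤ s) {p : ℕ} (hp : p ≤ tauSum s t) :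
    blockIdx t p ∈ Finset.Icc 1 s := by
  have hmem : s ∈ {i : ℕ | 1 ≤ i ∧ p ≤ ∑ j ∈ Finset.Icc 1 i, t j} := ⟨hs, hp⟩
  exact Finset.mem_Icc.2 ⟨(Nat.sInf_mem ⟨s, hmem⟩).1, Nat.sInf_le hmem⟩

theorem le_sum_blockIdx (hs : 1 ≤ s) {p : ℕ} (hp : p ≤ tauSum s t) :
    p ≤ ∑ j ∈ Finset.Icc 1 (blockIdx t p), t j :=
  (Nat.sInf_mem (⟨s, hs, hp⟩ : {i : ℕ | 1 ≤ i ∧ p ≤ ∑ j ∈ Finset.Icc 1 i, t j}.Nonempty)).2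

theorem blockIdx_one (ht : 1 ≤ t 1) : blockIdx t 1 = 1 := by
  have hmem : 1 ∈ {i : ℕ | 1 ≤ i ∧ 1 ≤ ∑ j ∈ Finset.Icc 1 i, t j} := ⟨le_rfl, by simpa using ht⟩
  exact le_antisymm (Nat.sInf_le hmem) (Nat.sInf_mem ⟨1, hmem⟩).1

theorem zero_mem_Tset (i : ℕ) : (0 : ZMod (2 ^ s)) ∈ Tset s i :=
  ⟨0, by positivity, by simp⟩

theorem two_pow_pred_mem_Tset (i : ℕ) : (2 : ZMod (2 ^ s)) ^ (i - 1) ∈ Tset s i :=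
  ⟨1, Nat.one_lt_two_pow (by omega), by simp⟩

theorem one_mem_Tset_one : (1 : ZMod (2 ^ s)) ∈ Tset s 1 := by
  simpa using two_pow_pred_mem_Tset (s := s) 1

theorem two_mul_two_pow_mul_eq_zero_of_mem_Tset {i : ℕ} (hi : i ∈ Finset.Icc 1 s)
    {x : ZMod (2 ^ s)} (hx : x ∈ Tset s i) : 2 * (2 ^ (s - i) * x) = 0 := by
  obtain ⟨j, -, rfl⟩ := hx
  obtain ⟨hi1, his⟩ := Finset.mem_Icc.1 hi
  have h2s : (2 : ZMod (2 ^ s)) ^ s = 0 := by exact_mod_cast ZMod.natCast_self (2 ^ s)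
  calc 2 * (2 ^ (s - i) * (j * 2 ^ (i - 1)))
      = (j : ZMod (2 ^ s)) * 2 ^ (1 + (s - i) + (i - 1)) := by ring
    _ = 0 := by rw [show 1 + (s - i) + (i - 1) = s by omega, h2s, mul_zero]

theorem castHom_eq_zero_of_mem_Tset {k i : ℕ} (hks : k ≤ s) (hki : k < i) {x : ZMod (2 ^ s)}
    (hx : x ∈ Tset s i) : ZMod.castHom (pow_dvd_pow 2 hks) (ZMod (2 ^ k)) x = 0 := by
  obtain ⟨j, -, rfl⟩ := hx
  have h2k : (2 : ZMod (2 ^ k)) ^ k = 0 := by exact_mod_cast ZMod.natCast_self (2 ^ k)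
  rw [map_mul, map_pow, map_natCast, map_ofNat, ← Nat.sub_add_cancel (show k ≤ i - 1 by omega),
    pow_add, h2k, mul_zero, mul_zero]

theorem mul_row_mem_hadamardCode (c : ZMod (2 ^ s)) (q : Fin (tauSum s t)) :
    (fun z : ColIdx s t => c * z.1 q) ∈ hadamardCode s t := by
  convert (hadamardCode s t).nsmul_mem (AddSubgroup.subset_closure ⟨q, rfl⟩) c.val using 1
  funext z
  simp [nsmul_eq_mul]

theorem const_mem_hadamardCode (hτ : 0 < tauSum s t) (c : ZMod (2 ^ s)) :
    (fun _ => c) ∈ hadamardCode s t := by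
  convert mul_row_mem_hadamardCode c ⟨0, hτ⟩ using 1
  funext z
  rw [z.2.1 ⟨0, hτ⟩ rfl, mul_one]

theorem constModTwoPow_hadamardCode {k : ℕ} (hks : k ≤ s)
    (hblock : ∀ q : Fin (tauSum s t), 1 ≤ (q : ℕ) → k < blockIdx t (q + 1)) :
    ConstModTwoPow (hadamardCode s t) k := by
  set f := ZMod.castHom (pow_dvd_pow 2 hks) (ZMod (2 ^ k))
  suffices h : ∀ v ∈ hadamardCode s t, ∃ c, ∀ z, f (v z) = c by
    intro v hv
    obtain ⟨c, hc⟩ := h v hv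
    refine ⟨c.val, fun z => ?_⟩
    rw [← hc z, ZMod.castHom_apply, ZMod.cast_eq_val, ZMod.val_natCast]
  intro v hv
  induction hv using AddSubgroup.closure_induction with
  | mem v hv =>
    obtain ⟨q, rfl⟩ := hv
    by_cases hq : (q : ℕ) = 0
    · exact ⟨1, fun z => by simp [z.2.1 q hq]⟩
    · exact ⟨0, fun z =>
        castHom_eq_zero_of_mem_Tset hks (hblock q (by omega)) (z.2.2 q (by omega))⟩
  | zero => exact ⟨0, fun z => map_zero f⟩
  | add v w _ _ hv hw =>
    obtain ⟨c, hc⟩ := hv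
    obtain ⟨d, hd⟩ := hw
    exact ⟨c + d, fun z => by simp [hc, hd]⟩
  | neg v _ hv =>
    obtain ⟨c, hc⟩ := hv
    exact ⟨-c, fun z => by simp [hc]⟩

theorem coord_mem_Tset (ht : 1 ≤ t 1) (z : ColIdx s t) (q : Fin (tauSum s t)) :
    z.1 q ∈ Tset s (blockIdx t (q + 1)) := by
  by_cases hq : (q : ℕ) = 0
  · rw [z.2.1 q hq, hq, zero_add, blockIdx_one ht]
    exact one_mem_Tset_one
  · exact z.2.2 q (by omega)

end Hadamard

section KernelBasis

variable (s : ℕ) (t : ℕ → ℕ) (k : ℕ)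

noncomputable def scaledRow (q : Fin (tauSum s t)) : ColIdx s t → ZMod (2 ^ s) :=
  fun z => 2 ^ (s - blockIdx t (q + 1)) * z.1 q

noncomputable def unitCol (q : Fin (tauSum s t)) : ColIdx s t :=
  ⟨fun q' => if (q' : ℕ) = 0 then 1 else if q' = q then 2 ^ (blockIdx t (q + 1) - 1) else 0,
    fun q' hq' => by simp [hq'],
    fun q' hq' => by
      dsimp only
      rw [if_neg (by omega)]
      split_ifs with h
      · exact h ▸ two_pow_pred_mem_Tset _
      · exact zero_mem_Tset _⟩

def lowConst (j : Fin (k + 1)) : ℕ :=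
  if (j : ℕ) = k then 2 ^ (s - 1) - 2 ^ k else 2 ^ (j : ℕ)

noncomputable def kernelBasis :
    Fin (tauSum s t) ⊕ Fin (k + 1) → ColIdx s t × (Fin (s - 1) → ZMod 2) → ZMod 2 :=
  Sum.elim (fun q => PhiMap s (scaledRow s t q))
    (fun j => PhiMap s fun _ => (lowConst s k j : ZMod (2 ^ s)))

variable {s t k}

theorem two_mul_scaledRow (ht : 1 ≤ t 1) (hs : 1 ≤ s) (q : Fin (tauSum s t)) (z : ColIdx s t) :
    2 * scaledRow s t q z = 0 :=
  two_mul_two_pow_mul_eq_zero_of_mem_Tset (blockIdx_mem_Icc hs q.2) (coord_mem_Tset ht z q)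

theorem scaledRow_unitCol (ht : 1 ≤ t 1) (hs : 1 ≤ s) (q q' : Fin (tauSum s t)) :
    scaledRow s t q' (unitCol s t q) = if (q' : ℕ) = 0 ∨ q' = q then 2 ^ (s - 1) else 0 := by
  simp only [scaledRow, unitCol]
  by_cases h0 : (q' : ℕ) = 0
  · simp [h0, blockIdx_one ht]
  · by_cases hq : q' = q
    · subst hq
      have hb := Finset.mem_Icc.1 (blockIdx_mem_Icc (p := q' + 1) hs q'.2)
      simp only [h0, if_false, if_true, or_true, ← pow_add]
      congr 1
      omega
    · simp [h0, hq]

theorem lowConst_lt (hk : k + 1 < s) (j : Fin (k + 1)) : lowConst s k j < 2 ^ (s - 1) := by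
  have hjk := j.2
  unfold lowConst
  split_ifs
  · exact Nat.sub_lt (by positivity) (by positivity)
  · exact Nat.pow_lt_pow_right (by norm_num) (by omega)

theorem testBit_lowConst (hk : k + 1 < s) (j : Fin (k + 1)) {i : ℕ} (hi : i ≤ k) :
    (lowConst s k j).testBit i = decide (i = j) := by
  unfold lowConst
  split_ifs with hj
  · rw [Nat.testBit_two_pow_sub_two_pow (by omega)]
    by_cases hik : i = k <;> simp [hik, hj] <;> omega
  · rw [Nat.testBit_two_pow, decide_eq_decide]
    exact eq_comm

theorem kernelBasis_mem_kernelSet (ht : 1 ≤ t 1) (hk : k + 1 < s)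
    (hblock : ∀ q : Fin (tauSum s t), 1 ≤ (q : ℕ) → k < blockIdx t (q + 1))
    (i : Fin (tauSum s t) ⊕ Fin (k + 1)) :
    kernelBasis s t k i ∈
      kernelSet (PhiMap s '' (hadamardCode s t : Set (ColIdx s t → ZMod (2 ^ s)))) := by
  have hs : 1 ≤ s := by omega
  have hconst := const_mem_hadamardCode (tauSum_pos hs ht)
  have hH := constModTwoPow_hadamardCode (by omega) hblock
  rcases i with q | j
  · exact phiMap_mem_kernelSet_of_two_mul_eq_zero _ hs (mul_row_mem_hadamardCode _ q)
      (two_mul_scaledRow ht hs q)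
  · simp only [kernelBasis, Sum.elim_inr, lowConst]
    split_ifs with hj
    · exact phiMap_const_two_pow_sub_mem_kernelSet hconst hH (by omega)
    · refine phiMap_const_mem_kernelSet_of_val_lt hconst hH ?_
      rw [ZMod.val_cast_of_lt (Nat.pow_lt_pow_right (by norm_num) (by omega))]
      exact Nat.pow_lt_pow_right (by norm_num) (by omega)

theorem gdigit_top_scaledRow_unitCol (ht : 1 ≤ t 1) (hs : 1 ≤ s) (q q' : Fin (tauSum s t)) :
    gdigit s (scaledRow s t q' (unitCol s t q)) (s - 1) =
      if (q' : ℕ) = 0 ∨ q' = q then 1 else 0 := by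
  rw [scaledRow_unitCol ht hs]
  split_ifs
  · rw [gdigit_two_pow (by omega), if_pos rfl]
  · exact gdigit_zero _

theorem gdigit_lowConst (hk : k + 1 < s) (j : Fin (k + 1)) {i : ℕ} (hi : i ≤ k) :
    gdigit s (lowConst s k j : ZMod (2 ^ s)) i = if i = j then 1 else 0 := by
  rw [gdigit_natCast ((lowConst_lt hk j).trans (Nat.pow_lt_pow_right (by norm_num) (by omega))),
    testBit_lowConst hk j hi]
  simp only [decide_eq_true_eq]

theorem gdigit_top_lowConst (hk : k + 1 < s) (j : Fin (k + 1)) :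
    gdigit s (lowConst s k j : ZMod (2 ^ s)) (s - 1) = 0 := by
  rw [gdigit_natCast ((lowConst_lt hk j).trans (Nat.pow_lt_pow_right (by norm_num) (by omega))),
    Nat.testBit_lt_two_pow (lowConst_lt hk j), if_neg Bool.false_ne_true]

/-- The top digit at `unitCol q` (plus, for `q ≠ 0`, the top digit at the first column, which
cancels the first scaled row) singles out the `q`-th scaled row; the digit `j` at the first column
singles out the `j`-th constant. -/
theorem linearIndependent_kernelBasis (ht : 1 ≤ t 1) (hk : k + 1 < s) :
    LinearIndependent (ZMod 2) (kernelBasis s t k) := by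
  have hs : 1 ≤ s := by omega
  set q₀ : Fin (tauSum s t) := ⟨0, tauSum_pos hs ht⟩
  let f : Fin (tauSum s t) ⊕ Fin (k + 1) →
      Module.Dual (ZMod 2) (ColIdx s t × (Fin (s - 1) → ZMod 2) → ZMod 2) :=
    Sum.elim
      (fun q => if (q : ℕ) = 0 then topDigitForm s (unitCol s t q)
        else topDigitForm s (unitCol s t q) + topDigitForm s (unitCol s t q₀))
      (fun j => digitForm s (unitCol s t q₀) ⟨j, by omega⟩)
  have hf : ∀ i j, f i (kernelBasis s t k j) = if i = j then 1 else 0 := by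
    rintro (q | j) (q' | j')
    · simp only [f, kernelBasis, Sum.elim_inl, Sum.inl.injEq, Fin.ext_iff]
      split_ifs <;>
        simp only [LinearMap.add_apply, topDigitForm_phiMap, gdigit_top_scaledRow_unitCol ht hs,
          Fin.ext_iff] <;>
        split_ifs <;> simp_all [q₀]
      decide
    · simp only [f, kernelBasis, Sum.elim_inl, Sum.elim_inr, reduceCtorEq, if_false]
      split_ifs <;> simp [topDigitForm_phiMap, gdigit_top_lowConst hk]
    · have hj : (j : ℕ) < s - 1 := by omega
      simp only [f, kernelBasis, Sum.elim_inl, Sum.elim_inr, digitForm_phiMap,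
        gdigit_eq_zero_of_two_mul_eq_zero hs (two_mul_scaledRow ht hs _ _) hj]
      simp
    · simp only [f, kernelBasis, Sum.elim_inr, digitForm_phiMap,
        gdigit_lowConst hk j' (Nat.lt_succ_iff.1 j.2), Sum.inr.injEq, Fin.ext_iff]
  exact .of_pairwise_dual_eq_zero_one _ f (fun i j hij => (hf i j).trans (if_neg hij))
    fun i => (hf i i).trans (if_pos rfl)

theorem le_kerDim_hadamardCode (ht : 1 ≤ t 1) (hk : k + 1 < s)
    (hblock : ∀ q : Fin (tauSum s t), 1 ≤ (q : ℕ) → k < blockIdx t (q + 1)) :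
    k + 1 + tauSum s t ≤
      kerDim (PhiMap s '' (hadamardCode s t : Set (ColIdx s t → ZMod (2 ^ s)))) := by
  simpa [add_comm] using
    card_le_kerDim (linearIndependent_kernelBasis ht hk) (kernelBasis_mem_kernelSet ht hk hblock)

end KernelBasis

section Sigma

variable {s : ℕ} {t : ℕ → ℕ}

theorem sigmaIdx_le_blockIdx (hs : 1 ≤ s) (ht : 1 ≤ t 1) {p : ℕ} (hp2 : 2 ≤ p)
    (hp : p ≤ tauSum s t) : sigmaIdx s t ≤ blockIdx t p := by
  have hb := Finset.mem_Icc.1 (blockIdx_mem_Icc hs hp)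
  unfold sigmaIdx
  split_ifs with h1
  · exact hb.1
  by_contra! hlt
  have hsum : ∑ j ∈ Finset.Icc 1 (blockIdx t p), t j = t 1 := by
    refine Finset.sum_eq_single_of_mem 1 (Finset.mem_Icc.2 ⟨le_rfl, hb.1⟩) fun i hi hi1 => ?_
    by_contra hne
    have hi := Finset.mem_Icc.1 hi
    have hmem : i ∈ {i : ℕ | 2 ≤ i ∧ i ≤ s ∧ 0 < t i} :=
      ⟨by omega, by omega, Nat.pos_of_ne_zero hne⟩
    exact absurd (Nat.sInf_le hmem) (by omega)
  have := le_sum_blockIdx hs hp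
  omega

theorem one_le_sigmaIdx (hs : 1 ≤ s) (ht : 1 ≤ t 1) (hτ : 2 ≤ tauSum s t) : 1 ≤ sigmaIdx s t := by
  unfold sigmaIdx
  split_ifs with h1
  · exact le_rfl
  obtain ⟨i, hi, hi1, hti⟩ : ∃ i ∈ Finset.Icc 1 s, i ≠ 1 ∧ 0 < t i := by
    by_contra! h
    have := Finset.sum_eq_single_of_mem 1 (Finset.mem_Icc.2 ⟨le_rfl, hs⟩)
      fun i hi hi1 => Nat.eq_zero_of_le_zero (h i hi hi1)
    exact absurd this (by unfold tauSum at hτ; omega)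
  have hi := Finset.mem_Icc.1 hi
  have hmem : i ∈ {i : ℕ | 2 ≤ i ∧ i ≤ s ∧ 0 < t i} := ⟨by omega, hi.2, hti⟩
  exact le_trans (by omega) (Nat.sInf_mem ⟨i, hmem⟩).1

end Sigma

theorem kerDim_ge (s : ℕ) (hs : 2 ≤ s) (t : ℕ → ℕ) (ht : 1 ≤ t 1)
    (hnl : ¬ IsLinearCode (PhiMap s '' (hadamardCode s t : Set (ColIdx s t → ZMod (2^s))))) :
    sigmaIdx s t + ∑ i ∈ Finset.Icc 1 s, t i ≤
      kerDim (PhiMap s '' (hadamardCode s t : Set (ColIdx s t → ZMod (2^s)))) := by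
  have hs1 : 1 ≤ s := by omega
  have hblock : ∀ q : Fin (tauSum s t), 1 ≤ (q : ℕ) → sigmaIdx s t ≤ blockIdx t (q + 1) :=
    fun q hq => sigmaIdx_le_blockIdx hs1 ht (by omega) q.2
  by_cases hσ : 1 ≤ sigmaIdx s t ∧ sigmaIdx s t < s
  · obtain ⟨k, hk⟩ : ∃ k, sigmaIdx s t = k + 1 := ⟨_, (Nat.succ_pred_eq_of_pos hσ.1).symm⟩
    rw [hk]
    exact le_kerDim_hadamardCode ht (by omega) fun q hq => by have := hblock q hq; omega
  · refine absurd (isLinearCode_phiMap_image hs1 (const_mem_hadamardCode (tauSum_pos hs1 ht))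
      (constModTwoPow_hadamardCode (by omega) fun q hq => ?_)) hnl
    have := one_le_sigmaIdx hs1 ht (by omega : 2 ≤ tauSum s t)
    have := hblock q hq
    omega
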